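/- Under the model rollout setup, equip S × A with a norm satisfying ‖(u,v)‖ ≤ ‖u‖ + ‖v‖. Let r : S × A → ℝ and Q̂ : S × A → ℝ be differentiable with ‖Dr‖ ≤ L_r and ‖DQ̂‖ ≤ L_Q̂ everywhere, let γ ∈ [0,1], h ≥ 1, and let (s̄_i, ā_i) be a second model rollout generated by the same policy π and model f̂ from a constant initial state s̄₀ ∈ S. Define Ĝ(θ) = D_θ[ ∑_{i=0}^{h−1} γ^i · r(ŝ_i(θ), â_i(θ)) + γ^h · Q̂(ŝ_h(θ), â_h(θ)) ] and Ḡ(θ) the analogous derivative along the second rollout. Then for every θ, ‖Ĝ(θ) − Ḡ(θ)‖ ≤ ∑_{i=0}^{h−1} γ^i · L_r · ( 2·K̂(i) + Δ_i(θ) ) + γ^h · L_Q̂ · ( 2·K̂(h) + Δ_h(θ) ), where Δ_i(θ) = ‖D_θŝ_i(θ) − D_θs̄_i(θ)‖ + ‖D_θâ_i(θ) − D_θā_i(θ)‖ and K̂(i) = (1 + L_π)·L_f̂·L_θ·∑_{j=0}^{i−1} (L_f̂(1+L_π))^j + L_θ. -/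

import Mathlib

/-!
Differentiating the rollout recursion gives `‖D ŝ_{i+1}‖ ≤ L_f̂ ‖D ŝ_i‖ + L_f̂ ‖D â_i‖` and
`‖D â_i‖ ≤ L_θ + L_π ‖D ŝ_i‖`, hence `‖D ŝ_i‖ ≤ L_f̂ L_θ ∑_{j<i} (L_f̂ (1 + L_π))^j` and, by the
chain rule, the derivative of `θ ↦ r(ŝ_i(θ), â_i(θ))` has norm at most
`L_r (‖D ŝ_i‖ + ‖D â_i‖) ≤ L_r K̂(i)` along either rollout. The two gradients are then compared
term by term through the triangle inequality `‖X - Y‖ ≤ ‖X‖ + ‖Y‖`.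
-/

open Finset

/-- Model rollout: states `ŝ_i : Θ → S` generated from the constant initial state `s₀`
by `ŝ₀(θ) = s₀`, `ŝ_{i+1}(θ) = f(ŝ_i(θ), π(θ, ŝ_i(θ)))`. -/
def sHat {Θ S A : Type*} (π : Θ × S → A) (f : S × A → S) (s₀ : S) : ℕ → Θ → S
  | 0 => fun _ => s₀
  | (i + 1) => fun θ => f (sHat π f s₀ i θ, π (θ, sHat π f s₀ i θ))

/-- Model rollout: actions `â_i(θ) = π(θ, ŝ_i(θ))`. -/
def aHat {Θ S A : Type*} (π : Θ × S → A) (f : S × A → S) (s₀ : S) (i : ℕ) : Θ → A :=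
  fun θ => π (θ, sHat π f s₀ i θ)

/-- `K̂(i) = (1 + L_π) · L_f̂ · L_θ · ∑_{j=0}^{i−1} (L_f̂ (1 + L_π))^j + L_θ`. -/
noncomputable def Khat (Lπ Lf Lθ : ℝ) (i : ℕ) : ℝ :=
  (1 + Lπ) * Lf * Lθ * ∑ j ∈ Finset.range i, (Lf * (1 + Lπ)) ^ j + Lθ

section Calculus

variable {ι E F G H : Type*}
  [NormedAddCommGroup E] [NormedSpace ℝ E] [NormedAddCommGroup F] [NormedSpace ℝ F]
  [NormedAddCommGroup G] [NormedSpace ℝ G] [NormedAddCommGroup H] [NormedSpace ℝ H]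

theorem ContinuousLinearMap.comp_prod_eq_add (L : E × F →L[ℝ] G) (A : H →L[ℝ] E)
    (B : H →L[ℝ] F) :
    L.comp (A.prod B) = (L.comp (.inl ℝ E F)).comp A + (L.comp (.inr ℝ E F)).comp B := by
  ext x
  simp [← map_add]

theorem DifferentiableAt.fderiv_prodMk_left {g : E × F → G} {p : E × F}
    (hg : DifferentiableAt ℝ g p) :
    fderiv ℝ (fun x => g (x, p.2)) p.1 = (fderiv ℝ g p).comp (.inl ℝ E F) :=
  (hg.hasFDerivAt.comp p.1 (hasFDerivAt_prodMk_left p.1 p.2)).fderiv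

theorem DifferentiableAt.fderiv_prodMk_right {g : E × F → G} {p : E × F}
    (hg : DifferentiableAt ℝ g p) :
    fderiv ℝ (fun y => g (p.1, y)) p.2 = (fderiv ℝ g p).comp (.inr ℝ E F) :=
  (hg.hasFDerivAt.comp p.2 (hasFDerivAt_prodMk_right p.1 p.2)).fderiv

theorem norm_fderiv_comp_prod_le_of_partial {g : E × F → G} {p : E × F}
    (hg : DifferentiableAt ℝ g p) {L₁ L₂ a b : ℝ}
    (h₁ : ‖fderiv ℝ (fun x => g (x, p.2)) p.1‖ ≤ L₁)
    (h₂ : ‖fderiv ℝ (fun y => g (p.1, y)) p.2‖ ≤ L₂)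
    {A : H →L[ℝ] E} {B : H →L[ℝ] F} (hA : ‖A‖ ≤ a) (hB : ‖B‖ ≤ b) :
    ‖(fderiv ℝ g p).comp (A.prod B)‖ ≤ L₁ * a + L₂ * b := by
  rw [hg.fderiv_prodMk_left] at h₁
  rw [hg.fderiv_prodMk_right] at h₂
  rw [ContinuousLinearMap.comp_prod_eq_add]
  calc _ ≤ ‖(fderiv ℝ g p).comp (.inl ℝ E F)‖ * ‖A‖ +
          ‖(fderiv ℝ g p).comp (.inr ℝ E F)‖ * ‖B‖ :=
        (norm_add_le _ _).trans (add_le_add (ContinuousLinearMap.opNorm_comp_le _ _)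
          (ContinuousLinearMap.opNorm_comp_le _ _))
    _ ≤ L₁ * a + L₂ * b := by
        gcongr
        exacts [(norm_nonneg _).trans h₁, (norm_nonneg _).trans h₂]

theorem norm_fderiv_comp_prod_le {g : E × F → G} {p : E × F} {L : ℝ}
    (hg : ‖fderiv ℝ g p‖ ≤ L) (A : H →L[ℝ] E) (B : H →L[ℝ] F) :
    ‖(fderiv ℝ g p).comp (A.prod B)‖ ≤ L * (‖A‖ + ‖B‖) := by
  calc _ ≤ ‖fderiv ℝ g p‖ * ‖A.prod B‖ := ContinuousLinearMap.opNorm_comp_le _ _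
    _ ≤ L * (‖A‖ + ‖B‖) := by
        rw [ContinuousLinearMap.opNorm_prod]
        gcongr
        · exact (norm_nonneg _).trans hg
        · exact norm_prod_le_iff.2
            ⟨le_add_of_nonneg_right (norm_nonneg _), le_add_of_nonneg_left (norm_nonneg _)⟩

theorem fderiv_sum_mul_add_mul {s : Finset ι} (c : ι → ℝ) (c' : ℝ) {Φ : ι → E → ℝ}
    {Ψ : E → ℝ} {x : E} (hΦ : ∀ i ∈ s, DifferentiableAt ℝ (Φ i) x)
    (hΨ : DifferentiableAt ℝ Ψ x) :
    fderiv ℝ (fun y => ∑ i ∈ s, c i * Φ i y + c' * Ψ y) x =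
      ∑ i ∈ s, c i • fderiv ℝ (Φ i) x + c' • fderiv ℝ Ψ x :=
  ((HasFDerivAt.fun_sum fun i hi => (hΦ i hi).hasFDerivAt.const_mul (c i)).add
    (hΨ.hasFDerivAt.const_mul c')).fderiv

theorem norm_sum_smul_add_smul_sub_le {s : Finset ι} {w : ι → ℝ} {w' : ℝ}
    (hw : ∀ i ∈ s, 0 ≤ w i) (hw' : 0 ≤ w') {X Y : ι → E} {X' Y' : E} {b : ι → ℝ} {b' : ℝ}
    (hb : ∀ i ∈ s, ‖X i - Y i‖ ≤ b i) (hb' : ‖X' - Y'‖ ≤ b') :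
    ‖(∑ i ∈ s, w i • X i + w' • X') - (∑ i ∈ s, w i • Y i + w' • Y')‖ ≤
      ∑ i ∈ s, w i * b i + w' * b' := by
  rw [add_sub_add_comm, ← sum_sub_distrib, ← smul_sub]
  simp_rw [← smul_sub]
  refine (norm_add_le _ _).trans (add_le_add ((norm_sum_le _ _).trans
    (sum_le_sum fun i hi => ?_)) ?_)
  · rw [norm_smul, Real.norm_of_nonneg (hw i hi)]
    exact mul_le_mul_of_nonneg_left (hb i hi) (hw i hi)
  · rw [norm_smul, Real.norm_of_nonneg hw']
    exact mul_le_mul_of_nonneg_left hb' hw'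

end Calculus

noncomputable def sHatDerivBound (Lπ Lf Lθ : ℝ) (i : ℕ) : ℝ :=
  Lf * Lθ * ∑ j ∈ range i, (Lf * (1 + Lπ)) ^ j

theorem sHatDerivBound_zero (Lπ Lf Lθ : ℝ) : sHatDerivBound Lπ Lf Lθ 0 = 0 := by
  simp [sHatDerivBound]

theorem sHatDerivBound_succ (Lπ Lf Lθ : ℝ) (i : ℕ) :
    sHatDerivBound Lπ Lf Lθ (i + 1) =
      Lf * sHatDerivBound Lπ Lf Lθ i + Lf * (Lθ + Lπ * sHatDerivBound Lπ Lf Lθ i) := by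
  simp only [sHatDerivBound, geom_sum_succ]
  ring

theorem Khat_eq (Lπ Lf Lθ : ℝ) (i : ℕ) :
    Khat Lπ Lf Lθ i = sHatDerivBound Lπ Lf Lθ i + (Lθ + Lπ * sHatDerivBound Lπ Lf Lθ i) := by
  simp only [Khat, sHatDerivBound]
  ring

section Rollout

variable {Θ S A G : Type*}
  [NormedAddCommGroup Θ] [NormedSpace ℝ Θ] [NormedAddCommGroup S] [NormedSpace ℝ S]
  [NormedAddCommGroup A] [NormedSpace ℝ A] [NormedAddCommGroup G] [NormedSpace ℝ G]
  {π : Θ × S → A} {f : S × A → S} {Lθ Lπ Lf : ℝ}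

theorem differentiable_sHat (hπ : Differentiable ℝ π) (hf : Differentiable ℝ f) (s₀ : S)
    (i : ℕ) : Differentiable ℝ (sHat π f s₀ i) := by
  induction i with
  | zero => exact differentiable_const s₀
  | succ i ih => exact hf.comp (ih.prodMk (hπ.comp (differentiable_id.prodMk ih)))

theorem differentiable_aHat (hπ : Differentiable ℝ π) (hf : Differentiable ℝ f) (s₀ : S)
    (i : ℕ) : Differentiable ℝ (aHat π f s₀ i) :=
  hπ.comp (differentiable_id.prodMk (differentiable_sHat hπ hf s₀ i))

theorem fderiv_comp_rollout (hπ : Differentiable ℝ π) (hf : Differentiable ℝ f) (s₀ : S)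
    {g : S × A → G} (hg : Differentiable ℝ g) (i : ℕ) (θ : Θ) :
    fderiv ℝ (fun t => g (sHat π f s₀ i t, aHat π f s₀ i t)) θ =
      (fderiv ℝ g (sHat π f s₀ i θ, aHat π f s₀ i θ)).comp
        ((fderiv ℝ (sHat π f s₀ i) θ).prod (fderiv ℝ (aHat π f s₀ i) θ)) :=
  ((hg _).hasFDerivAt.comp θ ((differentiable_sHat hπ hf s₀ i θ).hasFDerivAt.prodMk
    (differentiable_aHat hπ hf s₀ i θ).hasFDerivAt)).fderiv

theorem norm_fderiv_aHat_le (hπ : Differentiable ℝ π) (hf : Differentiable ℝ f)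
    (hπθ : ∀ p : Θ × S, ‖fderiv ℝ (fun θ : Θ => π (θ, p.2)) p.1‖ ≤ Lθ)
    (hπs : ∀ p : Θ × S, ‖fderiv ℝ (fun s : S => π (p.1, s)) p.2‖ ≤ Lπ)
    (s₀ : S) (i : ℕ) (θ : Θ) {c : ℝ} (hs : ‖fderiv ℝ (sHat π f s₀ i) θ‖ ≤ c) :
    ‖fderiv ℝ (aHat π f s₀ i) θ‖ ≤ Lθ + Lπ * c := by
  have hderiv : fderiv ℝ (aHat π f s₀ i) θ = (fderiv ℝ π (θ, sHat π f s₀ i θ)).comp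
      ((ContinuousLinearMap.id ℝ Θ).prod (fderiv ℝ (sHat π f s₀ i) θ)) :=
    ((hπ _).hasFDerivAt.comp θ
      ((hasFDerivAt_id θ).prodMk (differentiable_sHat hπ hf s₀ i θ).hasFDerivAt)).fderiv
  rw [hderiv]
  simpa using norm_fderiv_comp_prod_le_of_partial (hπ _) (hπθ _) (hπs _)
    ContinuousLinearMap.norm_id_le hs

theorem norm_fderiv_sHat_le (hπ : Differentiable ℝ π) (hf : Differentiable ℝ f)
    (hπθ : ∀ p : Θ × S, ‖fderiv ℝ (fun θ : Θ => π (θ, p.2)) p.1‖ ≤ Lθ)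
    (hπs : ∀ p : Θ × S, ‖fderiv ℝ (fun s : S => π (p.1, s)) p.2‖ ≤ Lπ)
    (hfs : ∀ p : S × A, ‖fderiv ℝ (fun s : S => f (s, p.2)) p.1‖ ≤ Lf)
    (hfa : ∀ p : S × A, ‖fderiv ℝ (fun a : A => f (p.1, a)) p.2‖ ≤ Lf)
    (s₀ : S) (i : ℕ) (θ : Θ) :
    ‖fderiv ℝ (sHat π f s₀ i) θ‖ ≤ sHatDerivBound Lπ Lf Lθ i := by
  induction i with
  | zero => simp [sHat, sHatDerivBound_zero]
  | succ i ih =>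
    have hstep : sHat π f s₀ (i + 1) = fun t => f (sHat π f s₀ i t, aHat π f s₀ i t) := rfl
    rw [sHatDerivBound_succ, hstep, fderiv_comp_rollout hπ hf s₀ hf]
    exact norm_fderiv_comp_prod_le_of_partial (hf _) (hfs _) (hfa _) ih
        (norm_fderiv_aHat_le hπ hf hπθ hπs s₀ i θ ih)

theorem norm_fderiv_comp_rollout_le (hπ : Differentiable ℝ π) (hf : Differentiable ℝ f)
    (hπθ : ∀ p : Θ × S, ‖fderiv ℝ (fun θ : Θ => π (θ, p.2)) p.1‖ ≤ Lθ)
    (hπs : ∀ p : Θ × S, ‖fderiv ℝ (fun s : S => π (p.1, s)) p.2‖ ≤ Lπ)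
    (hfs : ∀ p : S × A, ‖fderiv ℝ (fun s : S => f (s, p.2)) p.1‖ ≤ Lf)
    (hfa : ∀ p : S × A, ‖fderiv ℝ (fun a : A => f (p.1, a)) p.2‖ ≤ Lf)
    {g : S × A → G} (hg : Differentiable ℝ g) {L : ℝ} (hgL : ∀ x, ‖fderiv ℝ g x‖ ≤ L)
    (s₀ : S) (i : ℕ) (θ : Θ) :
    ‖fderiv ℝ (fun t => g (sHat π f s₀ i t, aHat π f s₀ i t)) θ‖ ≤ L * Khat Lπ Lf Lθ i := by
  have hs := norm_fderiv_sHat_le hπ hf hπθ hπs hfs hfa s₀ i θ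
  rw [fderiv_comp_rollout hπ hf s₀ hg, Khat_eq]
  exact (norm_fderiv_comp_prod_le (hgL _) _ _).trans <| mul_le_mul_of_nonneg_left
    (add_le_add hs (norm_fderiv_aHat_le hπ hf hπθ hπs s₀ i θ hs)) ((norm_nonneg _).trans (hgL 0))

theorem norm_fderiv_comp_rollout_sub_le (hπ : Differentiable ℝ π) (hf : Differentiable ℝ f)
    (hπθ : ∀ p : Θ × S, ‖fderiv ℝ (fun θ : Θ => π (θ, p.2)) p.1‖ ≤ Lθ)
    (hπs : ∀ p : Θ × S, ‖fderiv ℝ (fun s : S => π (p.1, s)) p.2‖ ≤ Lπ)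
    (hfs : ∀ p : S × A, ‖fderiv ℝ (fun s : S => f (s, p.2)) p.1‖ ≤ Lf)
    (hfa : ∀ p : S × A, ‖fderiv ℝ (fun a : A => f (p.1, a)) p.2‖ ≤ Lf)
    {g : S × A → G} (hg : Differentiable ℝ g) {L : ℝ} (hgL : ∀ x, ‖fderiv ℝ g x‖ ≤ L)
    (s₀ sbar₀ : S) (i : ℕ) (θ : Θ) :
    ‖fderiv ℝ (fun t => g (sHat π f s₀ i t, aHat π f s₀ i t)) θ -
        fderiv ℝ (fun t => g (sHat π f sbar₀ i t, aHat π f sbar₀ i t)) θ‖ ≤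
      L * (2 * Khat Lπ Lf Lθ i +
        (‖fderiv ℝ (sHat π f s₀ i) θ - fderiv ℝ (sHat π f sbar₀ i) θ‖ +
          ‖fderiv ℝ (aHat π f s₀ i) θ - fderiv ℝ (aHat π f sbar₀ i) θ‖)) := by
  have hbound := norm_fderiv_comp_rollout_le hπ hf hπθ hπs hfs hfa hg hgL
  have hL : 0 ≤ L := (norm_nonneg _).trans (hgL 0)
  calc _ ≤ L * Khat Lπ Lf Lθ i + L * Khat Lπ Lf Lθ i :=
        (norm_sub_le _ _).trans (add_le_add (hbound s₀ i θ) (hbound sbar₀ i θ))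
    _ ≤ _ := by
        have : 0 ≤ L * (‖fderiv ℝ (sHat π f s₀ i) θ - fderiv ℝ (sHat π f sbar₀ i) θ‖ +
            ‖fderiv ℝ (aHat π f s₀ i) θ - fderiv ℝ (aHat π f sbar₀ i) θ‖) := by positivity
        linarith

end Rollout

theorem stmt10_general {Θ S A : Type*}
    [NormedAddCommGroup Θ] [NormedSpace ℝ Θ]
    [NormedAddCommGroup S] [NormedSpace ℝ S]
    [NormedAddCommGroup A] [NormedSpace ℝ A]
    (π : Θ × S → A) (f : S × A → S) (s₀ sbar₀ : S)
    (Lθ Lπ Lf Lr LQ : ℝ)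
    (hπdiff : Differentiable ℝ π)
    (hπθ : ∀ p : Θ × S, ‖fderiv ℝ (fun θ : Θ => π (θ, p.2)) p.1‖ ≤ Lθ)
    (hπs : ∀ p : Θ × S, ‖fderiv ℝ (fun s : S => π (p.1, s)) p.2‖ ≤ Lπ)
    (hfdiff : Differentiable ℝ f)
    (hfs : ∀ p : S × A, ‖fderiv ℝ (fun s : S => f (s, p.2)) p.1‖ ≤ Lf)
    (hfa : ∀ p : S × A, ‖fderiv ℝ (fun a : A => f (p.1, a)) p.2‖ ≤ Lf)
    (r Qh : S × A → ℝ)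
    (hrdiff : Differentiable ℝ r) (hrL : ∀ x : S × A, ‖fderiv ℝ r x‖ ≤ Lr)
    (hQdiff : Differentiable ℝ Qh) (hQL : ∀ x : S × A, ‖fderiv ℝ Qh x‖ ≤ LQ)
    (γ : ℝ) (hγ : γ ∈ Set.Icc (0 : ℝ) 1) (h : ℕ) :
    ∀ θ : Θ,
      ‖fderiv ℝ (fun θ' : Θ =>
            (∑ i ∈ Finset.range h, γ ^ i * r (sHat π f s₀ i θ', aHat π f s₀ i θ')) +
              γ ^ h * Qh (sHat π f s₀ h θ', aHat π f s₀ h θ')) θ -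
          fderiv ℝ (fun θ' : Θ =>
            (∑ i ∈ Finset.range h, γ ^ i * r (sHat π f sbar₀ i θ', aHat π f sbar₀ i θ')) +
              γ ^ h * Qh (sHat π f sbar₀ h θ', aHat π f sbar₀ h θ')) θ‖ ≤
        (∑ i ∈ Finset.range h, γ ^ i * Lr *
            (2 * Khat Lπ Lf Lθ i +
              (‖fderiv ℝ (sHat π f s₀ i) θ - fderiv ℝ (sHat π f sbar₀ i) θ‖ +
                ‖fderiv ℝ (aHat π f s₀ i) θ - fderiv ℝ (aHat π f sbar₀ i) θ‖))) +
          γ ^ h * LQ *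
            (2 * Khat Lπ Lf Lθ h +
              (‖fderiv ℝ (sHat π f s₀ h) θ - fderiv ℝ (sHat π f sbar₀ h) θ‖ +
                ‖fderiv ℝ (aHat π f s₀ h) θ - fderiv ℝ (aHat π f sbar₀ h) θ‖)) := by
  intro θ
  have hdiff {g : S × A → ℝ} (hg : Differentiable ℝ g) (z : S) (i : ℕ) :
      DifferentiableAt ℝ (fun t => g (sHat π f z i t, aHat π f z i t)) θ :=
    (hg.comp ((differentiable_sHat hπdiff hfdiff z i).prodMk
      (differentiable_aHat hπdiff hfdiff z i))) θ
  rw [fderiv_sum_mul_add_mul _ _ (fun i _ => hdiff hrdiff s₀ i) (hdiff hQdiff s₀ h),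
    fderiv_sum_mul_add_mul _ _ (fun i _ => hdiff hrdiff sbar₀ i) (hdiff hQdiff sbar₀ h)]
  simp only [mul_assoc]
  exact norm_sum_smul_add_smul_sub_le (fun i _ => pow_nonneg hγ.1 i) (pow_nonneg hγ.1 h)
    (fun i _ => norm_fderiv_comp_rollout_sub_le hπdiff hfdiff hπθ hπs hfs hfa hrdiff hrL
      s₀ sbar₀ i θ)
    (norm_fderiv_comp_rollout_sub_le hπdiff hfdiff hπθ hπs hfs hfa hQdiff hQL s₀ sbar₀ h θ)

/-- **Pathwise gradient comparison of the h-step model value expansion along two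
rollouts** (core of the gradient-variance bound, Proposition 2). -/
theorem stmt10 {Θ S A : Type*}
    [NormedAddCommGroup Θ] [NormedSpace ℝ Θ]
    [NormedAddCommGroup S] [NormedSpace ℝ S]
    [NormedAddCommGroup A] [NormedSpace ℝ A]
    (π : Θ × S → A) (f : S × A → S) (s₀ sbar₀ : S)
    (Lθ Lπ Lf Lr LQ : ℝ)
    (hπdiff : Differentiable ℝ π)
    (hπθ : ∀ p : Θ × S, ‖fderiv ℝ (fun θ : Θ => π (θ, p.2)) p.1‖ ≤ Lθ)
    (hπs : ∀ p : Θ × S, ‖fderiv ℝ (fun s : S => π (p.1, s)) p.2‖ ≤ Lπ)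
    (hfdiff : Differentiable ℝ f)
    (hfs : ∀ p : S × A, ‖fderiv ℝ (fun s : S => f (s, p.2)) p.1‖ ≤ Lf)
    (hfa : ∀ p : S × A, ‖fderiv ℝ (fun a : A => f (p.1, a)) p.2‖ ≤ Lf)
    (r Qh : S × A → ℝ)
    (hrdiff : Differentiable ℝ r) (hrL : ∀ x : S × A, ‖fderiv ℝ r x‖ ≤ Lr)
    (hQdiff : Differentiable ℝ Qh) (hQL : ∀ x : S × A, ‖fderiv ℝ Qh x‖ ≤ LQ)
    (γ : ℝ) (hγ : γ ∈ Set.Icc (0 : ℝ) 1) (h : ℕ) (hh : 1 ≤ h) :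
    ∀ θ : Θ,
      ‖fderiv ℝ (fun θ' : Θ =>
            (∑ i ∈ Finset.range h, γ ^ i * r (sHat π f s₀ i θ', aHat π f s₀ i θ')) +
              γ ^ h * Qh (sHat π f s₀ h θ', aHat π f s₀ h θ')) θ -
          fderiv ℝ (fun θ' : Θ =>
            (∑ i ∈ Finset.range h, γ ^ i * r (sHat π f sbar₀ i θ', aHat π f sbar₀ i θ')) +
              γ ^ h * Qh (sHat π f sbar₀ h θ', aHat π f sbar₀ h θ')) θ‖ ≤
        (∑ i ∈ Finset.range h, γ ^ i * Lr *
            (2 * Khat Lπ Lf Lθ i +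
              (‖fderiv ℝ (sHat π f s₀ i) θ - fderiv ℝ (sHat π f sbar₀ i) θ‖ +
                ‖fderiv ℝ (aHat π f s₀ i) θ - fderiv ℝ (aHat π f sbar₀ i) θ‖))) +
          γ ^ h * LQ *
            (2 * Khat Lπ Lf Lθ h +
              (‖fderiv ℝ (sHat π f s₀ h) θ - fderiv ℝ (sHat π f sbar₀ h) θ‖ +
                ‖fderiv ℝ (aHat π f s₀ h) θ - fderiv ℝ (aHat π f sbar₀ h) θ‖)) :=
  stmt10_general π f s₀ sbar₀ Lθ Lπ Lf Lr LQ hπdiff hπθ hπs hfdiff hfs hfa r Qh hrdiff hrL hQdiff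
    hQL γ hγ h
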